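/- Let ρ be a density matrix on (ℂ²)^⊗3 with ρᵀ = ρ, and set x = tr(ρ SWAP₁₂), y = tr(ρ SWAP₁₃), z = tr(ρ SWAP₂₃). Then (x² + y² + z²) − 2(xy + xz + yz) + 2(x + y + z) ≤ 3 (Parekh–Thompson triangle inequality). -/

import Mathlib

/-!
Let `a, b` be the swaps of tensor factors 1,2 and 1,3, so that `c = a b a` is the swap of 2,3,
and let `x, y, z` be the expectations of `a, b, c` in the state `ρ`. Inside the group algebra of
`S₃ = ⟨a, b | a² = b² = 1, a b a = b a b⟩`, the operators `R₁ = (2c - a - b)/3` and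
`R₂ = (a - b)/√3` are self-adjoint, anticommute and both square to the central idempotent `P` of
the two-dimensional irreducible representation, which acts as the identity on them: they behave
like two Pauli matrices. For every real `t` the state is nonnegative on
`(tP - r₁R₁ - r₂R₂)^* (tP - r₁R₁ - r₂R₂) = (t² + r₁² + r₂²) P - 2t (r₁R₁ + r₂R₂)`, where `rᵢ` is
the expectation of `Rᵢ`; the discriminant of this quadratic in `t` gives `r₁² + r₂² ≤ p²`, where
`p ≥ 0` is the expectation of `P`. Finally `P + 2A = 1 - (a + b + c)/3` with `A` the
antisymmetrizer, a self-adjoint idempotent, so `0 ≤ p ≤ 1 - (x + y + z)/3`. Multiplied out,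
`r₁² + r₂² ≤ (1 - (x + y + z)/3)²` is equivalent to the Parekh–Thompson inequality.
-/

open Matrix
open scoped ComplexOrder

/-- The permutation operator `T(π)` on `(ℂ^d)^⊗n`, sending the basis vector
`e_f` to `e_{f ∘ π⁻¹}`. -/
noncomputable def permOp (n d : ℕ) (π : Equiv.Perm (Fin n)) :
    Matrix (Fin n → Fin d) (Fin n → Fin d) ℂ :=
  Matrix.of fun i j => if i = j ∘ ⇑π.symm then 1 else 0

/-- The swap operator exchanging tensor factors `i` and `j` of `(ℂ²)^⊗n`. -/
noncomputable def swapOp (n : ℕ) (i j : Fin n) :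
    Matrix (Fin n → Fin 2) (Fin n → Fin 2) ℂ :=
  permOp n 2 (Equiv.swap i j)

/-- The Coxeter presentation of `S₃`: such a pair is the image of the generators `(1 2), (1 3)`
under a representation of `S₃`. -/
structure IsBraidedInvolutions {R : Type*} [Ring R] (a b : R) : Prop where
  mul_self_left : a * a = 1
  mul_self_right : b * b = 1
  braid : a * b * a = b * a * b

namespace IsBraidedInvolutions

variable {R : Type*} [Ring R] {a b : R}

/- Together with `mul_self_left` and `mul_self_right`, the next four rewrite rules form a
confluent rewriting system on right-associated words in `a, b` whose normal forms are
`1, a, b, ab, ba, aba`; `simp` with them therefore computes in the group algebra of `S₃`. -/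

theorem mul_mul_self_left (h : IsBraidedInvolutions a b) (m : R) : a * (a * m) = m := by
  rw [← mul_assoc, h.mul_self_left, one_mul]

theorem mul_mul_self_right (h : IsBraidedInvolutions a b) (m : R) : b * (b * m) = m := by
  rw [← mul_assoc, h.mul_self_right, one_mul]

theorem braid_assoc (h : IsBraidedInvolutions a b) : b * (a * b) = a * (b * a) := by
  simp only [← mul_assoc, h.braid]

theorem braid_mul (h : IsBraidedInvolutions a b) (m : R) :
    b * (a * (b * m)) = a * (b * (a * m)) := by
  simp only [← mul_assoc, h.braid]

end IsBraidedInvolutions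

section StandardOperators

variable {R : Type*} [Ring R] [Algebra ℝ R] {a b : R}

/-- The central idempotent `(χ 1 / 6) • ∑ g, χ g⁻¹ • g` of the two-dimensional irreducible
character `χ` of `S₃`. -/
noncomputable def standardProj (a b : R) : R := (3 : ℝ)⁻¹ • ((2 : ℝ) • 1 - a * b - b * a)

noncomputable def standardR₁ (a b : R) : R := (3 : ℝ)⁻¹ • ((2 : ℝ) • (a * b * a) - a - b)

noncomputable def standardR₂ (a b : R) : R := (√3)⁻¹ • (a - b)

noncomputable def antisymmetrizer (a b : R) : R :=
  (6 : ℝ)⁻¹ • (1 - a - b - a * b * a + a * b + b * a)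

theorem standardProj_add_two_smul_antisymmetrizer (a b : R) :
    standardProj a b + (2 : ℝ) • antisymmetrizer a b = 1 - (3 : ℝ)⁻¹ • (a + b + a * b * a) := by
  unfold standardProj antisymmetrizer
  module

theorem standardR₁_mul_self (h : IsBraidedInvolutions a b) :
    standardR₁ a b * standardR₁ a b = standardProj a b := by
  simp only [standardR₁, standardProj, mul_sub, sub_mul, mul_assoc, smul_mul_assoc, mul_smul_comm,
    mul_one, h.mul_self_left, h.mul_self_right, h.mul_mul_self_left, h.mul_mul_self_right,
    h.braid_assoc, h.braid_mul]
  module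

theorem standardR₂_mul_self (h : IsBraidedInvolutions a b) :
    standardR₂ a b * standardR₂ a b = standardProj a b := by
  have h3 : (√3)⁻¹ * (√3)⁻¹ = (3 : ℝ)⁻¹ := by rw [← mul_inv, Real.mul_self_sqrt (by norm_num)]
  simp only [standardR₂, standardProj, smul_mul_smul_comm, h3, mul_sub, sub_mul, h.mul_self_left,
    h.mul_self_right]
  module

theorem standardR₁_mul_standardR₂_add (h : IsBraidedInvolutions a b) :
    standardR₁ a b * standardR₂ a b + standardR₂ a b * standardR₁ a b = 0 := by
  simp only [standardR₁, standardR₂, mul_sub, sub_mul, mul_assoc, smul_mul_assoc, mul_smul_comm,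
    h.mul_self_left, h.mul_self_right, h.mul_mul_self_left, h.braid_assoc, h.braid_mul]
  module

theorem standardProj_mul_standardR₁ (h : IsBraidedInvolutions a b) :
    standardProj a b * standardR₁ a b = standardR₁ a b := by
  simp only [standardR₁, standardProj, mul_sub, sub_mul, mul_assoc, smul_mul_assoc, mul_smul_comm,
    mul_one, one_mul, h.mul_self_left, h.mul_self_right, h.mul_mul_self_left, h.mul_mul_self_right,
    h.braid_assoc, h.braid_mul]
  module

theorem standardProj_mul_standardR₂ (h : IsBraidedInvolutions a b) :
    standardProj a b * standardR₂ a b = standardR₂ a b := by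
  simp only [standardR₂, standardProj, mul_sub, sub_mul, mul_assoc, smul_mul_assoc, mul_smul_comm,
    mul_one, one_mul, h.mul_self_left, h.mul_self_right, h.braid_assoc]
  module

theorem antisymmetrizer_mul_self (h : IsBraidedInvolutions a b) :
    antisymmetrizer a b * antisymmetrizer a b = antisymmetrizer a b := by
  simp only [antisymmetrizer, mul_sub, sub_mul, mul_add, add_mul, mul_assoc, smul_mul_assoc,
    mul_smul_comm, mul_one, one_mul, h.mul_self_left, h.mul_self_right, h.mul_mul_self_left,
    h.mul_mul_self_right, h.braid_assoc, h.braid_mul]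
  module

end StandardOperators

section SelfAdjoint

variable {R : Type*} [Ring R] [StarRing R] [Algebra ℝ R] [StarModule ℝ R] {a b : R}

theorem standardR₁_isSelfAdjoint (ha : IsSelfAdjoint a) (hb : IsSelfAdjoint b) :
    IsSelfAdjoint (standardR₁ a b) := by
  simp only [IsSelfAdjoint, standardR₁, star_smul, star_sub, star_mul, ha.star_eq, hb.star_eq,
    star_trivial, mul_assoc]

theorem standardR₂_isSelfAdjoint (ha : IsSelfAdjoint a) (hb : IsSelfAdjoint b) :
    IsSelfAdjoint (standardR₂ a b) := by
  simp only [IsSelfAdjoint, standardR₂, star_smul, star_sub, ha.star_eq, hb.star_eq, star_trivial]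

theorem antisymmetrizer_isSelfAdjoint (ha : IsSelfAdjoint a) (hb : IsSelfAdjoint b) :
    IsSelfAdjoint (antisymmetrizer a b) := by
  simp only [IsSelfAdjoint, antisymmetrizer, star_smul, star_add, star_sub, star_mul, star_one,
    ha.star_eq, hb.star_eq, star_trivial, mul_assoc]
  module

end SelfAdjoint

namespace Matrix

variable {n : Type*} [Fintype n]

noncomputable def expectation (ρ : Matrix n n ℂ) : Matrix n n ℂ →ₗ[ℝ] ℝ :=
  Complex.reLm ∘ₗ traceLinearMap n ℝ ℂ ∘ₗ LinearMap.mulLeft ℝ ρ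

theorem expectation_apply (ρ M : Matrix n n ℂ) : ρ.expectation M = (ρ * M).trace.re := rfl

theorem expectation_one [DecidableEq n] (ρ : Matrix n n ℂ) : ρ.expectation 1 = ρ.trace.re := by
  rw [expectation_apply, mul_one]

namespace PosSemidef

variable {ρ : Matrix n n ℂ}

theorem expectation_star_mul_self_nonneg (hρ : ρ.PosSemidef) (M : Matrix n n ℂ) :
    0 ≤ ρ.expectation (star M * M) := by
  rw [expectation_apply, star_eq_conjTranspose, ← mul_assoc, trace_mul_cycle]
  exact (Complex.nonneg_iff.mp (hρ.mul_mul_conjTranspose_same M).trace_nonneg).1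

theorem sqrt_sq_add_sq_le_expectation (hρ : ρ.PosSemidef) {E R₁ R₂ : Matrix n n ℂ}
    (hR₁ : IsSelfAdjoint R₁) (hR₂ : IsSelfAdjoint R₂) (h₁ : R₁ * R₁ = E) (h₂ : R₂ * R₂ = E)
    (hE₁ : E * R₁ = R₁) (hE₂ : E * R₂ = R₂) (h₁₂ : R₁ * R₂ + R₂ * R₁ = 0) :
    √(ρ.expectation R₁ ^ 2 + ρ.expectation R₂ ^ 2) ≤ ρ.expectation E := by
  set r₁ := ρ.expectation R₁
  set r₂ := ρ.expectation R₂
  set p := ρ.expectation E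
  have hE : star E = E := by rw [← h₁, star_mul, hR₁.star_eq]
  have hEE : E * E = E := by nth_rw 2 [← h₁]; rw [← mul_assoc, hE₁, h₁]
  have hR₁E : R₁ * E = R₁ := by rw [← hR₁.star_eq, ← hE, ← star_mul, hE₁]
  have hR₂E : R₂ * E = R₂ := by rw [← hR₂.star_eq, ← hE, ← star_mul, hE₂]
  have hR₂₁ : R₂ * R₁ = -(R₁ * R₂) := eq_neg_of_add_eq_zero_right h₁₂
  have hp : 0 ≤ p := by
    simpa only [hR₁.star_eq, h₁] using hρ.expectation_star_mul_self_nonneg R₁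
  have hquad : ∀ t : ℝ,
      0 ≤ p * (t * t) + (-2 * (r₁ ^ 2 + r₂ ^ 2)) * t + (r₁ ^ 2 + r₂ ^ 2) * p := by
    intro t
    set N := r₁ • R₁ + r₂ • R₂
    have hsq : star (t • E - N) * (t • E - N) = (t * t + (r₁ ^ 2 + r₂ ^ 2)) • E - (2 * t) • N := by
      simp only [N, star_sub, star_add, star_smul, star_trivial, hE, hR₁.star_eq, hR₂.star_eq,
        mul_sub, sub_mul, mul_add, add_mul, smul_mul_assoc, mul_smul_comm, hEE, hE₁, hE₂, hR₁E,
        hR₂E, h₁, h₂, hR₂₁]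
      module
    have hnonneg := hρ.expectation_star_mul_self_nonneg (t • E - N)
    rw [hsq, map_sub, map_smul, map_smul, map_add, map_smul, map_smul] at hnonneg
    simp only [smul_eq_mul] at hnonneg
    nlinarith
  have hdisc := discrim_le_zero hquad
  rw [discrim] at hdisc
  rw [Real.sqrt_le_left hp]
  nlinarith [sq_nonneg r₁, sq_nonneg r₂]

theorem parekh_thompson_of_isBraidedInvolutions [DecidableEq n] (hρ : ρ.PosSemidef)
    (htr : ρ.trace = 1) {a b : Matrix n n ℂ} (h : IsBraidedInvolutions a b)
    (ha : IsSelfAdjoint a) (hb : IsSelfAdjoint b) {x y z : ℝ} (hx : ρ.expectation a = x)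
    (hy : ρ.expectation b = y) (hz : ρ.expectation (a * b * a) = z) :
    (x ^ 2 + y ^ 2 + z ^ 2) - 2 * (x * y + x * z + y * z) + 2 * (x + y + z) ≤ 3 := by
  have hbloch := hρ.sqrt_sq_add_sq_le_expectation (standardR₁_isSelfAdjoint ha hb)
    (standardR₂_isSelfAdjoint ha hb) (standardR₁_mul_self h) (standardR₂_mul_self h)
    (standardProj_mul_standardR₁ h) (standardProj_mul_standardR₂ h)
    (standardR₁_mul_standardR₂_add h)
  have hanti : 0 ≤ ρ.expectation (antisymmetrizer a b) := by
    simpa only [(antisymmetrizer_isSelfAdjoint ha hb).star_eq, antisymmetrizer_mul_self h] using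
      hρ.expectation_star_mul_self_nonneg (antisymmetrizer a b)
  have hsum := congrArg ρ.expectation (standardProj_add_two_smul_antisymmetrizer a b)
  simp only [map_add, map_sub, map_smul, smul_eq_mul, expectation_one, htr, Complex.one_re, hx,
    hy, hz] at hsum
  have hr₁ : ρ.expectation (standardR₁ a b) = (2 * z - x - y) / 3 := by
    simp only [standardR₁, map_sub, map_smul, smul_eq_mul, hx, hy, hz]
    ring
  have hr₂ : ρ.expectation (standardR₂ a b) ^ 2 = (x - y) ^ 2 / 3 := by
    simp only [standardR₂, map_sub, map_smul, smul_eq_mul, hx, hy, inv_pow, mul_pow,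
      Real.sq_sqrt (show (0 : ℝ) ≤ 3 by norm_num)]
    ring
  rw [hr₂, hr₁, Real.sqrt_le_iff] at hbloch
  nlinarith [hbloch.1, hbloch.2, hanti]

end PosSemidef

end Matrix

section PermOp

variable (n d : ℕ)

theorem permOp_one : permOp n d 1 = 1 := by
  ext i j
  rw [permOp, of_apply, one_apply]
  rfl

theorem permOp_mul (π σ : Equiv.Perm (Fin n)) :
    permOp n d π * permOp n d σ = permOp n d (π * σ) := by
  ext i j
  simp only [permOp, mul_apply, of_apply, mul_ite, mul_one, mul_zero, Finset.sum_ite_eq',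
    Finset.mem_univ, if_true, Function.comp_assoc]
  rfl

theorem permOp_conjTranspose (π : Equiv.Perm (Fin n)) : (permOp n d π)ᴴ = permOp n d π⁻¹ := by
  ext i j
  simp [permOp, Equiv.Perm.inv_def, Equiv.eq_comp_symm, eq_comm]

end PermOp

section SwapOp

variable {n : ℕ}

theorem swapOp_mul_self (i j : Fin n) : swapOp n i j * swapOp n i j = 1 := by
  rw [swapOp, permOp_mul, Equiv.swap_mul_self, permOp_one]

theorem swapOp_isSelfAdjoint (i j : Fin n) : IsSelfAdjoint (swapOp n i j) := by
  rw [IsSelfAdjoint, star_eq_conjTranspose, swapOp, permOp_conjTranspose, Equiv.swap_inv]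

theorem swapOp_mul_swapOp_mul_swapOp {i j k : Fin n} (hki : k ≠ i) (hkj : k ≠ j) :
    swapOp n i j * swapOp n i k * swapOp n i j = swapOp n j k := by
  rw [swapOp, swapOp, swapOp, permOp_mul, permOp_mul, Equiv.swap_comm i k,
    Equiv.swap_mul_swap_mul_swap hki hkj]

theorem isBraidedInvolutions_swapOp {i j k : Fin n} (hij : i ≠ j) (hik : i ≠ k) (hjk : j ≠ k) :
    IsBraidedInvolutions (swapOp n i j) (swapOp n i k) where
  mul_self_left := swapOp_mul_self i j
  mul_self_right := swapOp_mul_self i k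
  braid := by
    rw [swapOp_mul_swapOp_mul_swapOp hik.symm hjk.symm, swapOp_mul_swapOp_mul_swapOp hij.symm hjk,
      swapOp, swapOp, Equiv.swap_comm]

end SwapOp

theorem parekh_thompson_general (ρ : Matrix (Fin 3 → Fin 2) (Fin 3 → Fin 2) ℂ)
    (hpsd : ρ.PosSemidef) (htr : ρ.trace = 1)
    (x y z : ℝ)
    (hx : x = (Matrix.trace (ρ * swapOp 3 0 1)).re)
    (hy : y = (Matrix.trace (ρ * swapOp 3 0 2)).re)
    (hz : z = (Matrix.trace (ρ * swapOp 3 1 2)).re) :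
    (x ^ 2 + y ^ 2 + z ^ 2) - 2 * (x * y + x * z + y * z) + 2 * (x + y + z) ≤ 3 := by
  have hz' : ρ.expectation (swapOp 3 0 1 * swapOp 3 0 2 * swapOp 3 0 1) = z := by
    rw [swapOp_mul_swapOp_mul_swapOp (by decide) (by decide)]
    exact hz.symm
  exact hpsd.parekh_thompson_of_isBraidedInvolutions htr
    (isBraidedInvolutions_swapOp (i := 0) (j := 1) (k := 2) (by decide) (by decide) (by decide))
    (swapOp_isSelfAdjoint 0 1) (swapOp_isSelfAdjoint 0 2) hx.symm hy.symm hz'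

theorem parekh_thompson (ρ : Matrix (Fin 3 → Fin 2) (Fin 3 → Fin 2) ℂ)
    (hpsd : ρ.PosSemidef) (htr : ρ.trace = 1)
    (hT : ρᵀ = ρ)
    (x y z : ℝ)
    (hx : x = (Matrix.trace (ρ * swapOp 3 0 1)).re)
    (hy : y = (Matrix.trace (ρ * swapOp 3 0 2)).re)
    (hz : z = (Matrix.trace (ρ * swapOp 3 1 2)).re) :
    (x ^ 2 + y ^ 2 + z ^ 2) - 2 * (x * y + x * z + y * z) + 2 * (x + y + z) ≤ 3 :=
  parekh_thompson_general ρ hpsd htr x y z hx hy hz
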